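/- Let f = Σ_{i=1}^n a_i 1_{U_i} be a piecewise constant image, and let μ be a trigonometric polynomial with coefficient support Λ and coefficients c = (c[k] : k ∈ Λ) that vanishes at every point of the edge set E = ∪_{i=1}^n ∂U_i. Then for every ℓ ∈ ℤ², both Σ_{k ∈ Λ} c[k] · 2πi (ℓ−k)_x · f̂[ℓ−k] = 0 and Σ_{k ∈ Λ} c[k] · 2πi (ℓ−k)_y · f̂[ℓ−k] = 0; that is, the Fourier coefficients of the gradient of f are annihilated by convolution with the coefficients of μ. -/

import Mathlib

/-!
Fix `ℓ` and put `h r = μ r e^{-2πiℓ·r} = ∑ₖ c[k] e^{2πi(k-ℓ)·r}`, a trigonometric polynomial that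
vanishes on every `∂Uᵢ`. Its partial derivatives are `∑ₖ c[k] 2πi (k-ℓ)_x e^{2πi(k-ℓ)·r}` and the
analogue in `y`, so the two sums of the statement are `-∫ f ∂ₓh = -∑ᵢ aᵢ ∫_{Uᵢ} ∂ₓh` and
`-∑ᵢ aᵢ ∫_{Uᵢ} ∂ᵧh`. Each `∫_{Uᵢ} ∂ₓh` vanishes by Fubini: a horizontal slice of `Uᵢ` is the
countable disjoint union of its connected components, bounded open intervals whose endpoints lie
on `∂Uᵢ`, where `h = 0`; the fundamental theorem of calculus gives `0` on each of them.
-/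

open MeasureTheory Set
open scoped Pointwise

noncomputable section

/-- The unit square `[0,1]²`. -/
def box : Set (ℝ × ℝ) := Set.Icc (0:ℝ) 1 ×ˢ Set.Icc (0:ℝ) 1

/-- The complex exponential `e^{2πi k·r}` with integer frequency `k`. -/
def e2 (k : ℤ × ℤ) (r : ℝ × ℝ) : ℂ :=
  Complex.exp (2 * Real.pi * Complex.I * ((k.1 : ℂ) * (r.1 : ℂ) + (k.2 : ℂ) * (r.2 : ℂ)))

/-- The trigonometric sum with coefficient support `Λ` and coefficients `c`. -/
def trigSum (Λ : Finset (ℤ × ℤ)) (c : ℤ × ℤ → ℂ) : (ℝ × ℝ) → ℂ :=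
  fun r => ∑ k ∈ Λ, c k * e2 k r

/-- The Fourier coefficient `f̂[m] = ∫_{[0,1]²} f(r) e^{-2πi m·r} dr`. -/
def fourierCoeff2 (f : ℝ × ℝ → ℂ) (m : ℤ × ℤ) : ℂ :=
  ∫ r in box, f r * Complex.exp (-(2 * Real.pi * Complex.I *
    ((m.1 : ℂ) * (r.1 : ℂ) + (m.2 : ℂ) * (r.2 : ℂ))))

/-- `d` (supported on `Λ`) satisfies the annihilation equation for `f` at `ℓ`:
`∑_{k ∈ Λ} d[k] ⋅ 2πi (ℓ-k)_x ⋅ f̂[ℓ-k] = 0` and likewise for the `y`-component. -/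
def Annihilates (Λ : Finset (ℤ × ℤ)) (d : ℤ × ℤ → ℂ) (f : ℝ × ℝ → ℂ) (ℓ : ℤ × ℤ) : Prop :=
  (∑ k ∈ Λ, d k * (2 * Real.pi * Complex.I * (((ℓ - k).1 : ℂ))) * fourierCoeff2 f (ℓ - k)) = 0 ∧
  (∑ k ∈ Λ, d k * (2 * Real.pi * Complex.I * (((ℓ - k).2 : ℂ))) * fourierCoeff2 f (ℓ - k)) = 0

open Bornology Complex

theorem closure_connectedComponentIn_diff_subset_frontier {α : Type*} [TopologicalSpace α]
    [LocallyConnectedSpace α] {V : Set α} (hV : IsOpen V) (x : α) :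
    closure (connectedComponentIn V x) \ connectedComponentIn V x ⊆ frontier V := by
  rintro z ⟨hz_cl, hz_not⟩
  refine ⟨closure_mono (connectedComponentIn_subset V x) hz_cl, fun hzV => hz_not ?_⟩
  rw [hV.interior_eq] at hzV
  obtain ⟨w, hwz, hwx⟩ := mem_closure_iff.1 hz_cl _ hV.connectedComponentIn
    (mem_connectedComponentIn hzV)
  rw [connectedComponentIn_eq hwx, ← connectedComponentIn_eq hwz]
  exact mem_connectedComponentIn hzV

theorem IsOpen.eq_Ioo_csInf_csSup {α : Type*} [ConditionallyCompleteLinearOrder α]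
    [TopologicalSpace α] [OrderTopology α] [DenselyOrdered α] [NoMinOrder α] [NoMaxOrder α]
    {s : Set α} (hs : IsOpen s) (hc : IsConnected s) (hb : BddBelow s) (ha : BddAbove s) :
    s = Ioo (sInf s) (sSup s) :=
  ((interior_maximal (subset_Icc_csInf_csSup hb ha) hs).trans interior_Icc.subset).antisymm
    (hc.Ioo_csInf_csSup_subset hb ha)

section VanishingOnFrontier

variable {E : Type*} [NormedAddCommGroup E] [NormedSpace ℝ E] [CompleteSpace E]

theorem IsOpen.setIntegral_connectedComponentIn_eq_zero {V : Set ℝ} (hV : IsOpen V)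
    (hVb : IsBounded V) {g g' : ℝ → E} (hg : ContinuousOn g (closure V))
    (hderiv : ∀ x ∈ V, HasDerivAt g (g' x) x) (hint : IntegrableOn g' V)
    (hfr : ∀ x ∈ frontier V, g x = 0) {x : ℝ} (hx : x ∈ V) :
    ∫ y in connectedComponentIn V x, g' y = 0 := by
  set C := connectedComponentIn V x
  have hCV : C ⊆ V := connectedComponentIn_subset V x
  have hCne : C.Nonempty := ⟨x, mem_connectedComponentIn hx⟩
  have hb : BddBelow C := (hVb.subset hCV).bddBelow
  have ha : BddAbove C := (hVb.subset hCV).bddAbove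
  have hC : C = Ioo (sInf C) (sSup C) := hV.connectedComponentIn.eq_Ioo_csInf_csSup
    ⟨hCne, isPreconnected_connectedComponentIn⟩ hb ha
  have hlt : sInf C < sSup C := nonempty_Ioo.1 (hC ▸ hCne)
  have hends : ∀ y ∈ closure C, y ∉ C → g y = 0 := fun y hy hyC =>
    hfr y (closure_connectedComponentIn_diff_subset_frontier hV x ⟨hy, hyC⟩)
  have hIcc : Icc (sInf C) (sSup C) ⊆ closure V := by
    rw [← closure_Ioo hlt.ne, ← hC]; exact closure_mono hCV
  rw [hC, ← integral_Ioc_eq_integral_Ioo, ← intervalIntegral.integral_of_le hlt.le,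
    intervalIntegral.integral_eq_sub_of_hasDerivAt_of_le hlt.le (hg.mono hIcc)
      (fun y hy => hderiv y (hCV (hC.superset hy)))
      ((intervalIntegrable_iff_integrableOn_Ioo_of_le hlt.le).2
        (hint.mono_set (hC.superset.trans hCV))),
    hends _ (csSup_mem_closure hCne ha) (fun h => (hC.subset h).2.false),
    hends _ (csInf_mem_closure hCne hb) (fun h => (hC.subset h).1.false), sub_zero]

theorem IsOpen.setIntegral_eq_zero_of_hasDerivAt {V : Set ℝ} (hV : IsOpen V)
    (hVb : IsBounded V) {g g' : ℝ → E} (hg : ContinuousOn g (closure V))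
    (hderiv : ∀ x ∈ V, HasDerivAt g (g' x) x) (hint : IntegrableOn g' V)
    (hfr : ∀ x ∈ frontier V, g x = 0) :
    ∫ x in V, g' x = 0 := by
  set S : Set (Set ℝ) := connectedComponentIn V '' V
  have hS : S.Countable := by
    refine (countable_range fun q : ℚ => connectedComponentIn V q).mono ?_
    rintro _ ⟨x, hx, rfl⟩
    obtain ⟨q, hq⟩ := Rat.denseRange_cast.exists_mem_open hV.connectedComponentIn
      ⟨x, mem_connectedComponentIn hx⟩
    exact ⟨q, (connectedComponentIn_eq hq).symm⟩
  have : Countable S := hS.to_subtype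
  have hunion : ⋃ C : S, (C : Set ℝ) = V := by
    refine subset_antisymm (iUnion_subset ?_) fun x hx => mem_iUnion.2 ?_
    · rintro ⟨_, y, -, rfl⟩
      exact connectedComponentIn_subset V y
    · exact ⟨⟨_, x, hx, rfl⟩, mem_connectedComponentIn hx⟩
  have hdisj : ∀ C D : S, C ≠ D → Disjoint (C : Set ℝ) D := by
    rintro ⟨_, x, _, rfl⟩ ⟨_, y, _, rfl⟩ hne
    refine disjoint_left.2 fun z hzx hzy => hne (Subtype.ext ?_)
    exact (connectedComponentIn_eq hzx).trans (connectedComponentIn_eq hzy).symm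
  have hmeas : ∀ C : S, MeasurableSet (C : Set ℝ) := by
    rintro ⟨_, x, -, rfl⟩
    exact hV.connectedComponentIn.measurableSet
  rw [← hunion, integral_iUnion hmeas hdisj (hunion ▸ hint)]
  refine (tsum_congr fun C => ?_).trans tsum_zero
  obtain ⟨_, x, hx, rfl⟩ := C
  exact hV.setIntegral_connectedComponentIn_eq_zero hVb hg hderiv hint hfr hx

theorem IsOpen.setIntegral_eq_zero_of_hasDerivAt_fst {U : Set (ℝ × ℝ)} (hU : IsOpen U)
    (hUb : IsBounded U) {h H : ℝ × ℝ → E} (hh : ContinuousOn h (closure U))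
    (hderiv : ∀ p ∈ U, HasDerivAt (fun x => h (x, p.2)) (H p) p.1) (hint : IntegrableOn H U)
    (hfr : ∀ p ∈ frontier U, h p = 0) :
    ∫ p in U, H p = 0 := by
  have hInd : Integrable (U.indicator H) (volume.prod volume) :=
    hint.integrable_indicator hU.measurableSet
  rw [← integral_indicator hU.measurableSet, Measure.volume_eq_prod, integral_prod_symm _ hInd]
  refine integral_eq_zero_of_ae ?_
  filter_upwards [hInd.prod_left_ae] with y hy
  have hcont : Continuous fun x : ℝ => (x, y) := by fun_prop
  set V := (fun x : ℝ => (x, y)) ⁻¹' U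
  have hslice : (fun x => U.indicator H (x, y)) = V.indicator fun x => H (x, y) :=
    funext fun x => (indicator_comp_right (fun x : ℝ => (x, y))).symm
  have hVo : IsOpen V := hU.preimage hcont
  rw [hslice, integral_indicator hVo.measurableSet]
  rw [hslice, integrable_indicator_iff hVo.measurableSet] at hy
  refine hVo.setIntegral_eq_zero_of_hasDerivAt ?_ ?_ (fun x hx => hderiv _ hx) hy
    (fun x hx => hfr _ (hcont.frontier_preimage_subset U hx))
  · exact hUb.image_fst.subset fun x hx => ⟨(x, y), hx, rfl⟩
  · exact hh.comp hcont.continuousOn fun x hx => hcont.closure_preimage_subset U hx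

theorem IsOpen.setIntegral_eq_zero_of_hasDerivAt_snd {U : Set (ℝ × ℝ)} (hU : IsOpen U)
    (hUb : IsBounded U) {h H : ℝ × ℝ → E} (hh : ContinuousOn h (closure U))
    (hderiv : ∀ p ∈ U, HasDerivAt (fun y => h (p.1, y)) (H p) p.2) (hint : IntegrableOn H U)
    (hfr : ∀ p ∈ frontier U, h p = 0) :
    ∫ p in U, H p = 0 := by
  have hswap : MeasurePreserving Prod.swap (volume : Measure (ℝ × ℝ)) volume :=
    Measure.volume_eq_prod ℝ ℝ ▸ Measure.measurePreserving_swap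
  let e := Homeomorph.prodComm ℝ ℝ
  rw [← hswap.setIntegral_preimage_emb MeasurableEquiv.prodComm.measurableEmbedding]
  refine (hU.preimage continuous_swap).setIntegral_eq_zero_of_hasDerivAt_fst (h := h ∘ Prod.swap)
    ?_ ?_ (fun p hp => hderiv _ hp) ?_ ?_
  · exact (hUb.image_snd.prod hUb.image_fst).subset fun p hp => ⟨⟨_, hp, rfl⟩, ⟨_, hp, rfl⟩⟩
  · exact hh.comp continuous_swap.continuousOn fun p hp => (e.preimage_closure U).symm.subset hp
  · exact (hswap.integrableOn_comp_preimage MeasurableEquiv.prodComm.measurableEmbedding).2 hint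
  · exact fun p hp => hfr _ ((e.preimage_frontier U).symm.subset hp)

end VanishingOnFrontier

section PiecewiseConstant

variable {X ι 𝕜 : Type*} [RCLike 𝕜] {t : Finset ι} {U : ι → Set X} {a : ι → 𝕜} {G : X → 𝕜}

theorem sum_indicator_const_mul_eq_sum_indicator (r : X) :
    (∑ i ∈ t, (U i).indicator (fun _ => a i) r) * G r =
      ∑ i ∈ t, (U i).indicator (fun r => a i * G r) r := by
  rw [Finset.sum_mul]
  exact Finset.sum_congr rfl fun i _ => (indicator_mul_left _ _ _).symm

variable [MeasurableSpace X] {μ : Measure X} {s : Set X}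

theorem IntegrableOn.sum_indicator_const_mul (hU : ∀ i, MeasurableSet (U i))
    (hG : IntegrableOn G s μ) :
    IntegrableOn (fun r => (∑ i ∈ t, (U i).indicator (fun _ => a i) r) * G r) s μ := by
  rw [show (fun r => _) = _ from funext sum_indicator_const_mul_eq_sum_indicator]
  exact integrable_finsetSum _ fun i _ => (hG.const_mul (a i)).indicator (hU i)

theorem setIntegral_sum_indicator_const_mul (hU : ∀ i, MeasurableSet (U i))
    (hUs : ∀ i, U i ⊆ s) (hG : IntegrableOn G s μ) :
    ∫ r in s, (∑ i ∈ t, (U i).indicator (fun _ => a i) r) * G r ∂μ =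
      ∑ i ∈ t, a i * ∫ r in U i, G r ∂μ := by
  simp_rw [sum_indicator_const_mul_eq_sum_indicator]
  rw [integral_finsetSum _ fun i _ => (hG.const_mul (a i)).indicator (hU i)]
  refine Finset.sum_congr rfl fun i _ => ?_
  rw [integral_indicator (hU i), Measure.restrict_restrict (hU i),
    inter_eq_self_of_subset_left (hUs i), integral_const_mul]

end PiecewiseConstant

theorem isCompact_box : IsCompact box := isCompact_Icc.prod isCompact_Icc

@[fun_prop]
theorem continuous_e2 (m : ℤ × ℤ) : Continuous (e2 m) := by
  unfold e2; fun_prop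

theorem e2_add (k m : ℤ × ℤ) (r : ℝ × ℝ) : e2 (k + m) r = e2 k r * e2 m r := by
  simp only [e2, ← Complex.exp_add, Prod.fst_add, Prod.snd_add]
  push_cast
  ring_nf

theorem fourierCoeff2_eq_setIntegral_e2 (f : ℝ × ℝ → ℂ) (m : ℤ × ℤ) :
    fourierCoeff2 f m = ∫ r in box, f r * e2 (-m) r := by
  simp only [fourierCoeff2, e2, Prod.fst_neg, Prod.snd_neg]
  push_cast
  ring_nf

theorem hasDerivAt_e2_fst (m : ℤ × ℤ) (p : ℝ × ℝ) :
    HasDerivAt (fun x : ℝ => e2 m (x, p.2)) (2 * Real.pi * I * m.1 * e2 m p) p.1 := by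
  have := ((((hasDerivAt_id' p.1).ofReal_comp.const_mul (m.1 : ℂ)).add_const
    ((m.2 : ℂ) * p.2)).const_mul (2 * Real.pi * I)).cexp
  convert this using 1
  · simp only [e2]
  · simp only [e2, ofReal_one]
    ring

theorem hasDerivAt_e2_snd (m : ℤ × ℤ) (p : ℝ × ℝ) :
    HasDerivAt (fun y : ℝ => e2 m (p.1, y)) (2 * Real.pi * I * m.2 * e2 m p) p.2 := by
  have := ((((hasDerivAt_id' p.2).ofReal_comp.const_mul (m.2 : ℂ)).const_add
    ((m.1 : ℂ) * p.1)).const_mul (2 * Real.pi * I)).cexp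
  convert this using 1
  · simp only [e2]
  · simp only [e2, ofReal_one]
    ring

section ShiftedTrigSum

variable (Λ : Finset (ℤ × ℤ)) (c : ℤ × ℤ → ℂ) (ℓ : ℤ × ℤ)

theorem sum_mul_e2_sub (r : ℝ × ℝ) :
    ∑ k ∈ Λ, c k * e2 (k - ℓ) r = trigSum Λ c r * e2 (-ℓ) r := by
  simp only [trigSum, Finset.sum_mul, sub_eq_add_neg, e2_add, mul_assoc]

theorem hasDerivAt_neg_sum_mul_e2_sub_fst (p : ℝ × ℝ) :
    HasDerivAt (fun x => -∑ k ∈ Λ, c k * e2 (k - ℓ) (x, p.2))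
      (∑ k ∈ Λ, c k * (2 * Real.pi * I * ((ℓ - k).1 : ℂ)) * e2 (k - ℓ) p) p.1 := by
  refine (HasDerivAt.fun_sum fun k _ =>
    (hasDerivAt_e2_fst (k - ℓ) p).const_mul (c k)).neg.congr_deriv ?_
  rw [← Finset.sum_neg_distrib]
  refine Finset.sum_congr rfl fun k _ => ?_
  push_cast [Prod.fst_sub]
  ring

theorem hasDerivAt_neg_sum_mul_e2_sub_snd (p : ℝ × ℝ) :
    HasDerivAt (fun y => -∑ k ∈ Λ, c k * e2 (k - ℓ) (p.1, y))
      (∑ k ∈ Λ, c k * (2 * Real.pi * I * ((ℓ - k).2 : ℂ)) * e2 (k - ℓ) p) p.2 := by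
  refine (HasDerivAt.fun_sum fun k _ =>
    (hasDerivAt_e2_snd (k - ℓ) p).const_mul (c k)).neg.congr_deriv ?_
  rw [← Finset.sum_neg_distrib]
  refine Finset.sum_congr rfl fun k _ => ?_
  push_cast [Prod.snd_sub]
  ring

theorem sum_mul_fourierCoeff2_sum_indicator {ι : Type*} (t : Finset ι) {U : ι → Set (ℝ × ℝ)}
    (a : ι → ℂ) (hU : ∀ i, MeasurableSet (U i)) (hUbox : ∀ i, U i ⊆ box) (D : ℤ × ℤ → ℂ) :
    ∑ k ∈ Λ, c k * D (ℓ - k) *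
        fourierCoeff2 (fun r => ∑ i ∈ t, (U i).indicator (fun _ => a i) r) (ℓ - k) =
      ∑ i ∈ t, a i * ∫ r in U i, ∑ k ∈ Λ, c k * D (ℓ - k) * e2 (k - ℓ) r := by
  set f := fun r => ∑ i ∈ t, (U i).indicator (fun _ => a i) r
  have he2 : ∀ m, IntegrableOn (e2 m) box :=
    fun m => (continuous_e2 m).continuousOn.integrableOn_compact isCompact_box
  calc ∑ k ∈ Λ, c k * D (ℓ - k) * fourierCoeff2 f (ℓ - k)
      = ∑ k ∈ Λ, ∫ r in box, c k * D (ℓ - k) * (f r * e2 (k - ℓ) r) := by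
        simp_rw [fourierCoeff2_eq_setIntegral_e2, neg_sub, integral_const_mul]
    _ = ∫ r in box, f r * ∑ k ∈ Λ, c k * D (ℓ - k) * e2 (k - ℓ) r := by
        rw [← integral_finsetSum _ fun k _ =>
          (IntegrableOn.sum_indicator_const_mul hU (he2 _)).const_mul _]
        simp_rw [Finset.mul_sum, mul_left_comm (f _)]
        rfl
    _ = ∑ i ∈ t, a i * ∫ r in U i, ∑ k ∈ Λ, c k * D (ℓ - k) * e2 (k - ℓ) r :=
        setIntegral_sum_indicator_const_mul hU hUbox
          (integrable_finsetSum _ fun k _ => (he2 _).const_mul _)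

end ShiftedTrigSum

theorem stmt0_general
    (n : ℕ) (a : Fin n → ℂ) (U : Fin n → Set (ℝ × ℝ))
    (hopen : ∀ i, IsOpen (U i))
    (hsub : ∀ i, U i ⊆ Set.Ioo (0:ℝ) 1 ×ˢ Set.Ioo (0:ℝ) 1)
    (f : ℝ × ℝ → ℂ)
    (hf : f = fun r => ∑ i, Set.indicator (U i) (fun _ => a i) r)
    (Λ : Finset (ℤ × ℤ)) (c : ℤ × ℤ → ℂ) (μ : ℝ × ℝ → ℂ)
    (hμrep : μ = trigSum Λ c)
    (hvanish : ∀ r ∈ ⋃ i, frontier (U i), μ r = 0) :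
    ∀ ℓ : ℤ × ℤ, Annihilates Λ c f ℓ := by
  intro ℓ
  subst hf hμrep
  have hUbox : ∀ i, U i ⊆ box := fun i =>
    (hsub i).trans (prod_mono Ioo_subset_Icc_self Ioo_subset_Icc_self)
  have hUb : ∀ i, IsBounded (U i) := fun i => isCompact_box.isBounded.subset (hUbox i)
  have hcont : Continuous fun r => -∑ k ∈ Λ, c k * e2 (k - ℓ) r := by fun_prop
  have hedge : ∀ i, ∀ p ∈ frontier (U i), -∑ k ∈ Λ, c k * e2 (k - ℓ) p = 0 := fun i p hp => by
    rw [sum_mul_e2_sub, hvanish p (mem_iUnion.2 ⟨i, hp⟩), zero_mul, neg_zero]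
  have hint : ∀ {G : ℝ × ℝ → ℂ}, Continuous G → ∀ i, IntegrableOn G (U i) := fun hG i =>
    (hG.continuousOn.integrableOn_compact isCompact_box).mono_set (hUbox i)
  have hmeas : ∀ i, MeasurableSet (U i) := fun i => (hopen i).measurableSet
  constructor
  · rw [sum_mul_fourierCoeff2_sum_indicator Λ c ℓ _ a hmeas hUbox fun m => 2 * Real.pi * I * m.1]
    refine Finset.sum_eq_zero fun i _ => mul_eq_zero_of_right _ ?_
    exact (hopen i).setIntegral_eq_zero_of_hasDerivAt_fst (hUb i) hcont.continuousOn
      (fun p _ => hasDerivAt_neg_sum_mul_e2_sub_fst Λ c ℓ p) (hint (by fun_prop) i) (hedge i)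
  · rw [sum_mul_fourierCoeff2_sum_indicator Λ c ℓ _ a hmeas hUbox fun m => 2 * Real.pi * I * m.2]
    refine Finset.sum_eq_zero fun i _ => mul_eq_zero_of_right _ ?_
    exact (hopen i).setIntegral_eq_zero_of_hasDerivAt_snd (hUb i) hcont.continuousOn
      (fun p _ => hasDerivAt_neg_sum_mul_e2_sub_snd Λ c ℓ p) (hint (by fun_prop) i) (hedge i)

/-- If `f = ∑ aᵢ 1_{Uᵢ}` is a piecewise constant image and `μ` is a
trigonometric polynomial with coefficients `c` on `Λ` vanishing on the edge set
`⋃ ∂Uᵢ`, then the Fourier coefficients of the gradient of `f` are annihilated by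
convolution with `c`, at every `ℓ ∈ ℤ²`. -/
theorem stmt0
    (n : ℕ) (a : Fin n → ℂ) (U : Fin n → Set (ℝ × ℝ))
    (ha : ∀ i, a i ≠ 0)
    (hopen : ∀ i, IsOpen (U i))
    (hne : ∀ i, (U i).Nonempty)
    (hsub : ∀ i, U i ⊆ Set.Ioo (0:ℝ) 1 ×ˢ Set.Ioo (0:ℝ) 1)
    (hdisj : ∀ i j, i ≠ j → Disjoint (U i) (U j))
    (f : ℝ × ℝ → ℂ)
    (hf : f = fun r => ∑ i, Set.indicator (U i) (fun _ => a i) r)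
    (Λ : Finset (ℤ × ℤ)) (c : ℤ × ℤ → ℂ) (μ : ℝ × ℝ → ℂ)
    (hμrep : μ = trigSum Λ c) (hμ0 : μ ≠ 0)
    (hvanish : ∀ r ∈ ⋃ i, frontier (U i), μ r = 0) :
    ∀ ℓ : ℤ × ℤ, Annihilates Λ c f ℓ :=
  stmt0_general n a U hopen hsub f hf Λ c μ hμrep hvanish

end
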